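/- arXiv:1908.09188 — 3 statements merged into one kernel-verified Lean document; each statement's English description precedes it below -/
import Mathlib

section
/- (Finite-dimensional Bogolyubov inequality) Let $V$ be a finite-dimensional Hilbert space, $H = H^*$ a self-adjoint operator on $V$, $\beta > 0$, and for an operator $B$ define $\langle B\rangle := \mathrm{Tr}(B e^{-\beta H})/\mathrm{Tr}(e^{-\beta H})$. Then for all linear operators $A, C$ on $V$: $\frac{\beta}{2}\,\langle A^*A + AA^*\rangle \cdot \langle [[C,H],C^*]\rangle \ge |\langle [C,A]\rangle|^2$. -/
open Matrix

variable {n : ℕ}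

/-- Thermal (Gibbs) average of `B` w.r.t. Hamiltonian `H` at inverse temperature `β`. -/
noncomputable def gibbsAvg (H : Matrix (Fin n) (Fin n) ℂ) (β : ℝ)
    (B : Matrix (Fin n) (Fin n) ℂ) : ℂ :=
  (B * NormedSpace.exp ((-(β : ℂ)) • H)).trace
    / (NormedSpace.exp ((-(β : ℂ)) • H)).trace

/-!
In an eigenbasis of `H`, with eigenvalues `E i` and Boltzmann weights `w i = exp (-β E i)`, the
three Gibbs averages are, up to the common factor `Z⁻¹ = (∑ i, w i)⁻¹`, the double sums
`∑ c_ij a_ji (w_i - w_j)`, `∑ |a_ji|² (w_i + w_j)` and `∑ |c_ij|² (E_j - E_i) (w_i - w_j)`.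
By Cauchy–Schwarz the claim then reduces to the termwise bound
`(e^x - e^y)² ≤ (e^x + e^y) / 2 · (x - y) (e^x - e^y)`, which is `tanh t ≤ t` for `t ≥ 0`.
-/

open Unitary

namespace Real

theorem monotone_mul_exp_add_one_sub_two_mul_exp_sub_one :
    Monotone fun d : ℝ => d * (exp d + 1) - 2 * (exp d - 1) := by
  have hderiv : ∀ d : ℝ, HasDerivAt (fun d => d * (exp d + 1) - 2 * (exp d - 1))
      (exp d * (d - 1 + exp (-d))) d := by
    intro d
    refine (((hasDerivAt_id d).mul ((hasDerivAt_exp d).add_const 1)).sub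
      (((hasDerivAt_exp d).sub_const 1).const_mul 2)).congr_deriv ?_
    rw [exp_neg, id]
    field_simp
    ring
  refine monotone_of_deriv_nonneg (fun d => (hderiv d).differentiableAt) fun d => ?_
  rw [(hderiv d).deriv]
  exact mul_nonneg (exp_pos d).le (by linarith [add_one_le_exp (-d)])

theorem sq_exp_sub_exp_le (x y : ℝ) :
    (exp x - exp y) ^ 2 ≤ (exp x + exp y) / 2 * ((x - y) * (exp x - exp y)) := by
  set g := fun d : ℝ => d * (exp d + 1) - 2 * (exp d - 1)
  have hsign : ∀ d, 0 ≤ (exp d - 1) * g d := by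
    intro d
    have hg0 : g 0 = 0 := by simp [g]
    rcases le_total 0 d with hd | hd
    · exact mul_nonneg (by linarith [one_le_exp hd])
        (hg0 ▸ monotone_mul_exp_add_one_sub_two_mul_exp_sub_one hd)
    · exact mul_nonneg_of_nonpos_of_nonpos (by linarith [exp_le_one_iff.mpr hd])
        (hg0 ▸ monotone_mul_exp_add_one_sub_two_mul_exp_sub_one hd)
  have hx : exp x = exp y * exp (x - y) := by rw [← exp_add, add_sub_cancel]
  have hdiff : (exp x + exp y) / 2 * ((x - y) * (exp x - exp y)) - (exp x - exp y) ^ 2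
      = exp y ^ 2 * ((exp (x - y) - 1) * g (x - y)) / 2 := by
    rw [hx]
    simp only [g]
    ring
  linarith [mul_nonneg (sq_nonneg (exp y)) (hsign (x - y))]

end Real

theorem norm_sum_sq_le_sum_mul_sum_of_sq_le_mul {ι E : Type*} [SeminormedAddCommGroup E]
    (s : Finset ι) {z : ι → E} {f g : ι → ℝ} (hf : ∀ i ∈ s, 0 ≤ f i) (hg : ∀ i ∈ s, 0 ≤ g i)
    (h : ∀ i ∈ s, ‖z i‖ ^ 2 ≤ f i * g i) :
    ‖∑ i ∈ s, z i‖ ^ 2 ≤ (∑ i ∈ s, f i) * ∑ i ∈ s, g i :=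
  (pow_le_pow_left₀ (norm_nonneg _) (norm_sum_le _ _) 2).trans
    (Finset.sum_sq_le_sum_mul_sum_of_sq_le_mul s hf hg h)

open Real in
theorem norm_sum_mul_exp_sub_exp_sq_le {κ : Type*} (s : Finset κ) (c a : κ → ℂ)
    (x y : κ → ℝ) :
    ‖∑ p ∈ s, c p * a p * ((exp (x p) - exp (y p) : ℝ) : ℂ)‖ ^ 2
      ≤ (∑ p ∈ s, ‖a p‖ ^ 2 * ((exp (x p) + exp (y p)) / 2))
        * ∑ p ∈ s, ‖c p‖ ^ 2 * ((x p - y p) * (exp (x p) - exp (y p))) := by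
  refine norm_sum_sq_le_sum_mul_sum_of_sq_le_mul s (fun p _ => by positivity)
    (fun p _ => mul_nonneg (sq_nonneg _) ?_) fun p _ => ?_
  · exact nonneg_of_mul_nonneg_right ((sq_nonneg _).trans (sq_exp_sub_exp_le (x p) (y p)))
      (by positivity)
  · rw [norm_mul, norm_mul, Complex.norm_real, norm_eq_abs, mul_pow, mul_pow, sq_abs]
    calc ‖c p‖ ^ 2 * ‖a p‖ ^ 2 * (exp (x p) - exp (y p)) ^ 2
        ≤ ‖c p‖ ^ 2 * ‖a p‖ ^ 2
            * ((exp (x p) + exp (y p)) / 2 * ((x p - y p) * (exp (x p) - exp (y p)))) := by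
          gcongr
          exact sq_exp_sub_exp_le (x p) (y p)
      _ = _ := by ring

namespace Matrix

variable {ι : Type*} [Fintype ι] [DecidableEq ι]

section CommSemiring

variable {R : Type*} [CommSemiring R]

theorem trace_mul_mul_diagonal (X Y : Matrix ι ι R) (w : ι → R) :
    (X * Y * diagonal w).trace = ∑ i, ∑ j, X i j * Y j i * w i := by
  simp only [trace, diag, mul_diagonal]
  simp only [mul_apply, Finset.sum_mul]

theorem trace_mul_mul_diagonal_swap (X Y : Matrix ι ι R) (w : ι → R) :
    (Y * X * diagonal w).trace = ∑ i, ∑ j, X i j * Y j i * w j := by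
  rw [trace_mul_mul_diagonal, Finset.sum_comm]
  simp only [mul_comm (Y _ _)]

theorem trace_mul_add_mul_mul_diagonal (X Y : Matrix ι ι R) (w : ι → R) :
    ((X * Y + Y * X) * diagonal w).trace = ∑ i, ∑ j, X i j * Y j i * (w i + w j) := by
  rw [add_mul, trace_add, trace_mul_mul_diagonal, trace_mul_mul_diagonal_swap]
  simp only [mul_add, Finset.sum_add_distrib]

end CommSemiring

section CommRing

variable {R : Type*} [CommRing R]

theorem trace_mul_sub_mul_mul_diagonal (X Y : Matrix ι ι R) (w : ι → R) :
    ((X * Y - Y * X) * diagonal w).trace = ∑ i, ∑ j, X i j * Y j i * (w i - w j) := by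
  rw [sub_mul, trace_sub, trace_mul_mul_diagonal, trace_mul_mul_diagonal_swap]
  simp only [mul_sub, Finset.sum_sub_distrib]

theorem mul_diagonal_sub_diagonal_mul_apply (X : Matrix ι ι R) (d : ι → R) (i j : ι) :
    (X * diagonal d - diagonal d * X) i j = X i j * (d j - d i) := by
  simp only [sub_apply, mul_diagonal, diagonal_mul]
  ring

theorem trace_conjStarAlgAut [StarRing R] (u : unitary (Matrix ι ι R)) (X : Matrix ι ι R) :
    (conjStarAlgAut R _ u X).trace = X.trace := by
  rw [conjStarAlgAut_apply, trace_mul_cycle, Unitary.coe_star_mul_self, one_mul]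

end CommRing

theorem exp_conjStarAlgAut (u : unitary (Matrix ι ι ℂ)) (X : Matrix ι ι ℂ) :
    NormedSpace.exp (conjStarAlgAut ℂ _ u X) = conjStarAlgAut ℂ _ u (NormedSpace.exp X) := by
  have hinv : ((u : Matrix ι ι ℂ))⁻¹ = star (u : Matrix ι ι ℂ) :=
    inv_eq_left_inv (Unitary.coe_star_mul_self u)
  simpa only [conjStarAlgAut_apply, hinv] using
    exp_conj (u : Matrix ι ι ℂ) X (Unitary.toUnits u).isUnit

theorem IsHermitian.conjStarAlgAut_exp_smul {H : Matrix ι ι ℂ} (hH : H.IsHermitian) (β : ℝ) :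
    conjStarAlgAut ℂ _ (star hH.eigenvectorUnitary) (NormedSpace.exp ((-(β : ℂ)) • H))
      = diagonal fun i => (Real.exp (-(β * hH.eigenvalues i)) : ℂ) := by
  rw [← exp_conjStarAlgAut, map_smul, hH.conjStarAlgAut_star_eigenvectorUnitary,
    ← diagonal_smul, exp_diagonal]
  congr 1
  funext i
  simp [← Complex.exp_eq_exp_ℂ]

open Real in
theorem bogolyubov_inequality_diagonal (E : ι → ℝ) (β : ℝ) (a c : Matrix ι ι ℂ) :
    ‖((c * a - a * c) * diagonal (fun i => (exp (-(β * E i)) : ℂ))).trace‖ ^ 2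
      ≤ β / 2 * ((aᴴ * a + a * aᴴ) * diagonal (fun i => (exp (-(β * E i)) : ℂ))).trace.re
        * (((c * diagonal (fun i => (E i : ℂ)) - diagonal (fun i => (E i : ℂ)) * c) * cᴴ
            - cᴴ * (c * diagonal (fun i => (E i : ℂ)) - diagonal (fun i => (E i : ℂ)) * c))
            * diagonal (fun i => (exp (-(β * E i)) : ℂ))).trace.re := by
  have hre_star_mul : ∀ (z : ℂ) (u v : ℝ),
      (star z * z * ((u : ℂ) + v)).re = ‖z‖ ^ 2 * (u + v) := by
    intro z u v
    rw [Complex.star_def, Complex.conj_mul']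
    norm_cast
  have hre_mul_star_mul : ∀ (z : ℂ) (e f u v : ℝ),
      (z * ((e : ℂ) - f) * star z * ((u : ℂ) - v)).re = ‖z‖ ^ 2 * ((e - f) * (u - v)) := by
    intro z e f u v
    rw [mul_right_comm z, Complex.star_def, Complex.mul_conj', mul_assoc]
    norm_cast
  rw [trace_mul_sub_mul_mul_diagonal, trace_mul_add_mul_mul_diagonal,
    trace_mul_sub_mul_mul_diagonal]
  simp only [mul_diagonal_sub_diagonal_mul_apply, conjTranspose_apply, Complex.re_sum,
    hre_star_mul, hre_mul_star_mul]
  have hcs := norm_sum_mul_exp_sub_exp_sq_le (Finset.univ ×ˢ Finset.univ) (fun p => c p.1 p.2)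
    (fun p => a p.2 p.1) (fun p => -(β * E p.1)) (fun p => -(β * E p.2))
  simp only [Finset.sum_product, Complex.ofReal_sub] at hcs
  refine hcs.trans_eq ?_
  simp only [Finset.mul_sum, Finset.sum_mul]
  exact Finset.sum_congr rfl fun i _ => Finset.sum_congr rfl fun j _ =>
    Finset.sum_congr rfl fun k _ => Finset.sum_congr rfl fun l _ => by ring

end Matrix

theorem Matrix.IsHermitian.gibbsAvg_eq_trace_mul_diagonal_div {H : Matrix (Fin n) (Fin n) ℂ}
    (hH : H.IsHermitian) (β : ℝ) (B : Matrix (Fin n) (Fin n) ℂ) :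
    gibbsAvg H β B
      = (conjStarAlgAut ℂ _ (star hH.eigenvectorUnitary) B
          * diagonal fun i => (Real.exp (-(β * hH.eigenvalues i)) : ℂ)).trace
        / ((∑ i, Real.exp (-(β * hH.eigenvalues i)) : ℝ) : ℂ) := by
  rw [gibbsAvg, ← trace_conjStarAlgAut (star hH.eigenvectorUnitary) (B * _), map_mul,
    ← trace_conjStarAlgAut (star hH.eigenvectorUnitary) (NormedSpace.exp _),
    hH.conjStarAlgAut_exp_smul, trace_diagonal]
  push_cast
  rfl

theorem norm_div_ofReal_sq_le_mul_re_mul_re {z w v : ℂ} {c : ℝ}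
    (h : ‖z‖ ^ 2 ≤ c * w.re * v.re) (r : ℝ) :
    ‖z / r‖ ^ 2 ≤ c * (w / r).re * (v / r).re := by
  rw [norm_div, Complex.norm_real, div_pow, Real.norm_eq_abs, sq_abs, Complex.div_ofReal_re,
    Complex.div_ofReal_re, show c * (w.re / r) * (v.re / r) = c * w.re * v.re / r ^ 2 by ring]
  exact div_le_div_of_nonneg_right h (sq_nonneg r)

theorem bogolyubov_inequality_general
    (H : Matrix (Fin n) (Fin n) ℂ) (hH : H.IsHermitian)
    (β : ℝ) (A C : Matrix (Fin n) (Fin n) ℂ) :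
    ‖gibbsAvg H β (C * A - A * C)‖ ^ 2
      ≤ β / 2 * (gibbsAvg H β (Aᴴ * A + A * Aᴴ)).re
          * (gibbsAvg H β ((C * H - H * C) * Cᴴ - Cᴴ * (C * H - H * C))).re := by
  simp only [hH.gibbsAvg_eq_trace_mul_diagonal_div, map_sub, map_add, map_mul,
    ← star_eq_conjTranspose, map_star, hH.conjStarAlgAut_star_eigenvectorUnitary]
  simp only [star_eq_conjTranspose]
  exact norm_div_ofReal_sq_le_mul_re_mul_re
    (bogolyubov_inequality_diagonal hH.eigenvalues β _ _) _

/-- The finite-dimensional Bogolyubov inequality: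
`(β/2)⟨A*A + AA*⟩ ⟨[[C,H],C*]⟩ ≥ |⟨[C,A]⟩|²`. -/
theorem bogolyubov_inequality (hn : 0 < n)
    (H : Matrix (Fin n) (Fin n) ℂ) (hH : H.IsHermitian)
    (β : ℝ) (hβ : 0 < β) (A C : Matrix (Fin n) (Fin n) ℂ) :
    ‖gibbsAvg H β (C * A - A * C)‖ ^ 2
      ≤ β / 2 * (gibbsAvg H β (Aᴴ * A + A * Aᴴ)).re
          * (gibbsAvg H β ((C * H - H * C) * Cᴴ - Cᴴ * (C * H - H * C))).re :=
  bogolyubov_inequality_general H hH β A C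
end

section
/- Let $A : \mathcal{D} \to \mathcal{D}$ be a linear operator on a dense subspace of a Hilbert space with adjoint restriction $A^\dagger := A^*|_{\mathcal{D}} : \mathcal{D} \to \mathcal{D}$. Let $W \subset V \subset \mathcal{D}$ be finite-dimensional subspaces with projections $P_W \le P_V$, and suppose $P_V A \subset A P_W$ (hence $P_W A^\dagger \subset A^\dagger P_V$). Then $A_V (A_V)^* + (A_V)^* A_V = (A A^\dagger + A^\dagger A)_V - (P_V - P_W) A^\dagger A (P_V - P_W)$, where $X_V := P_V X P_V$. In particular $A_V(A_V)^* + (A_V)^*A_V \le (AA^\dagger + A^\dagger A)_V$ as quadratic forms. -/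
/-!
Write `P_V`, `P_W` for the orthogonal projections. The hypothesis `P_V A = A P_W` gives
`A_V = A P_W`, hence `A_V A_V^* = (AA†)_V` and `A_V^* A_V = (A†A)_V P_W`. Moreover `A†A` maps
`V ⊖ W` into `Wᗮ`: for `w ∈ W` and `u ∈ V ⊖ W`, `⟪w, A†A u⟫ = ⟪Aw, P_V Au⟫ = ⟪Aw, A P_W u⟫ = 0`,
since `Aw ∈ V`. Hence `(P_V - P_W) (A†A)_V (P_V - P_W) = (A†A)_V - (A†A)_V P_W`, which is the
identity. The subtracted operator is a conjugate of the positive operator `(A†A)_V` by the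
self-adjoint `P_V - P_W`, whence the inequality.
-/

variable {H : Type*} [NormedAddCommGroup H] [InnerProductSpace ℂ H] [CompleteSpace H]

/-- The compression `X_V := P_V X P_V : H → H` of an operator `X : 𝒟 → 𝒟`
to a finite-dimensional subspace `V ≤ 𝒟`. -/
noncomputable def compress (D V : Submodule ℂ H) (hVD : V ≤ D)
    [FiniteDimensional ℂ V] (X : D →ₗ[ℂ] D) : H →L[ℂ] H :=
  (LinearMap.toContinuousLinearMap
      ((V.subtypeL ∘L Submodule.orthogonalProjectionOnto V).toLinearMap.comp
        (D.subtype.comp (X.comp (Submodule.inclusion hVD)))))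
    ∘L (Submodule.orthogonalProjectionOnto V : H →L[ℂ] V)

set_option linter.unusedSectionVars false

open ContinuousLinearMap Submodule

section Compress

variable {D V : Submodule ℂ H} (hVD : V ≤ D) [FiniteDimensional ℂ V]

theorem compress_apply (X : D →ₗ[ℂ] D) (x : H) :
    compress D V hVD X x = V.starProjection (X (inclusion hVD (V.orthogonalProjectionOnto x))) :=
  rfl

theorem compress_add (X Y : D →ₗ[ℂ] D) :
    compress D V hVD (X + Y) = compress D V hVD X + compress D V hVD Y := by
  ext x
  simp only [compress_apply, LinearMap.add_apply, coe_add, map_add, add_apply]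

theorem starProjection_comp_compress (X : D →ₗ[ℂ] D) :
    V.starProjection ∘L compress D V hVD X = compress D V hVD X := by
  ext x
  exact starProjection_eq_self_iff.mpr (coe_mem _)

theorem compress_comp_starProjection (X : D →ₗ[ℂ] D) :
    compress D V hVD X ∘L V.starProjection = compress D V hVD X := by
  ext x
  simp only [comp_apply, compress_apply, orthogonalProjectionOnto_starProjection_of_le le_rfl]

theorem adjoint_compress {X Y : D →ₗ[ℂ] D}
    (hXY : ∀ x y : D, inner ℂ (X x : H) (y : H) = inner ℂ (x : H) (Y y : H)) :
    adjoint (compress D V hVD X) = compress D V hVD Y := by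
  suffices h : compress D V hVD X = adjoint (compress D V hVD Y) by rw [h, adjoint_adjoint]
  refine (eq_adjoint_iff _ _).mpr fun x y => ?_
  calc inner ℂ (compress D V hVD X x) y
      = inner ℂ (X (inclusion hVD (V.orthogonalProjectionOnto x)) : H) (V.starProjection y) :=
        inner_starProjection_left_eq_right V _ y
    _ = inner ℂ (V.starProjection x) (Y (inclusion hVD (V.orthogonalProjectionOnto y)) : H) :=
        hXY (inclusion hVD (V.orthogonalProjectionOnto x)) (inclusion hVD (V.orthogonalProjectionOnto y))
    _ = inner ℂ x (compress D V hVD Y y) := inner_starProjection_left_eq_right V x _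

theorem isPositive_compress_comp {A Adag : D →ₗ[ℂ] D}
    (hadj : ∀ x y : D, inner ℂ (A x : H) (y : H) = inner ℂ (x : H) (Adag y : H)) :
    (compress D V hVD (Adag ∘ₗ A)).IsPositive := by
  have hsymm : ∀ x y : D, inner ℂ (Adag (A x) : H) (y : H) = inner ℂ (x : H) (Adag (A y) : H) :=
    fun x y => by rw [← hadj, ← inner_conj_symm, ← hadj, inner_conj_symm]
  refine isPositive_def'.mpr ⟨adjoint_compress hVD hsymm, fun x => ?_⟩
  rw [reApplyInnerSelf_apply, compress_apply, inner_starProjection_left_eq_right]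
  change 0 ≤ RCLike.re (inner ℂ (Adag (A (inclusion hVD (V.orthogonalProjectionOnto x))) : H)
    (inclusion hVD (V.orthogonalProjectionOnto x) : H))
  rw [← inner_conj_symm, ← hadj, RCLike.conj_re]
  exact inner_self_nonneg

end Compress

section Intertwining

variable {D V W : Submodule ℂ H} (hVD : V ≤ D) (hWV : W ≤ V)
  [FiniteDimensional ℂ V] [FiniteDimensional ℂ W] {A : D →ₗ[ℂ] D}

theorem apply_mem_of_starProjection_apply_eq
    (hPA : ∀ x : D, V.starProjection (A x) = A (inclusion (hWV.trans hVD) (W.orthogonalProjectionOnto x)))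
    (w : W) : (A (inclusion (hWV.trans hVD) w) : H) ∈ V := by
  rw [← starProjection_eq_self_iff, hPA]
  congr 3
  exact orthogonalProjectionOnto_mem_subspace_eq_self w

theorem compress_apply_of_starProjection_apply_eq
    (hPA : ∀ x : D, V.starProjection (A x) = A (inclusion (hWV.trans hVD) (W.orthogonalProjectionOnto x)))
    (x : H) : compress D V hVD A x = A (inclusion (hWV.trans hVD) (W.orthogonalProjectionOnto x)) := by
  rw [compress_apply, hPA]
  congr 3
  exact orthogonalProjectionOnto_starProjection_of_le hWV x

theorem compress_comp_compress_of_starProjection_apply_eq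
    (hPA : ∀ x : D, V.starProjection (A x) = A (inclusion (hWV.trans hVD) (W.orthogonalProjectionOnto x)))
    (Y : D →ₗ[ℂ] D) : compress D V hVD A ∘L compress D V hVD Y = compress D V hVD (A ∘ₗ Y) := by
  ext x
  rw [comp_apply, compress_apply_of_starProjection_apply_eq hVD hWV hPA, compress_apply,
    orthogonalProjectionOnto_starProjection_of_le hWV, ← hPA]
  rfl

theorem compress_comp_compress_eq_comp_starProjection
    (hPA : ∀ x : D, V.starProjection (A x) = A (inclusion (hWV.trans hVD) (W.orthogonalProjectionOnto x)))
    (Y : D →ₗ[ℂ] D) :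
    compress D V hVD Y ∘L compress D V hVD A = compress D V hVD (Y ∘ₗ A) ∘L W.starProjection := by
  ext x
  have hA : inclusion hVD (V.orthogonalProjectionOnto (compress D V hVD A x))
      = A (inclusion (hWV.trans hVD) (W.orthogonalProjectionOnto x)) := by
    ext
    rw [coe_inclusion, coe_orthogonalProjectionOnto_apply,
      compress_apply_of_starProjection_apply_eq hVD hWV hPA, starProjection_eq_self_iff]
    exact apply_mem_of_starProjection_apply_eq hVD hWV hPA _
  have hW : inclusion hVD (V.orthogonalProjectionOnto (W.starProjection x))
      = inclusion (hWV.trans hVD) (W.orthogonalProjectionOnto x) := by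
    ext
    exact starProjection_eq_self_iff.mpr (hWV (coe_mem _))
  rw [comp_apply, comp_apply, compress_apply hVD Y, hA, compress_apply, hW]
  rfl

theorem orthogonalProjectionOnto_adjoint_apply_eq_zero {Adag : D →ₗ[ℂ] D}
    (hadj : ∀ x y : D, inner ℂ (A x : H) (y : H) = inner ℂ (x : H) (Adag y : H))
    (hPA : ∀ x : D, V.starProjection (A x) = A (inclusion (hWV.trans hVD) (W.orthogonalProjectionOnto x)))
    {u : D} (hu : W.orthogonalProjectionOnto (u : H) = 0) :
    W.orthogonalProjectionOnto (Adag (A u) : H) = 0 := by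
  rw [orthogonalProjectionOnto_eq_zero_iff, mem_orthogonal]
  intro w hw
  set w' := inclusion (hWV.trans hVD) (⟨w, hw⟩ : W)
  have hAw : V.starProjection (A w' : H) = A w' :=
    starProjection_eq_self_iff.mpr (apply_mem_of_starProjection_apply_eq hVD hWV hPA _)
  calc inner ℂ w (Adag (A u) : H)
      = inner ℂ (A w' : H) (A u : H) := (hadj w' (A u)).symm
    _ = inner ℂ (A w' : H) (V.starProjection (A u)) := by
        rw [← hAw, inner_starProjection_left_eq_right, hAw]
    _ = 0 := by rw [hPA, hu, map_zero, map_zero, ZeroMemClass.coe_zero, inner_zero_right]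

theorem starProjection_comp_compress_comp_sub_eq_zero {Adag : D →ₗ[ℂ] D}
    (hadj : ∀ x y : D, inner ℂ (A x : H) (y : H) = inner ℂ (x : H) (Adag y : H))
    (hPA : ∀ x : D, V.starProjection (A x) = A (inclusion (hWV.trans hVD) (W.orthogonalProjectionOnto x))) :
    W.starProjection ∘L compress D V hVD (Adag ∘ₗ A) ∘L (V.starProjection - W.starProjection) = 0 := by
  ext x
  have hu : W.orthogonalProjectionOnto
      (inclusion hVD (V.orthogonalProjectionOnto (V.starProjection x - W.starProjection x)) : H) = 0 := by
    change W.orthogonalProjectionOnto (V.starProjection (V.starProjection x - W.starProjection x)) = 0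
    rw [orthogonalProjectionOnto_starProjection_of_le hWV, map_sub,
      orthogonalProjectionOnto_starProjection_of_le hWV, starProjection_apply,
      orthogonalProjectionOnto_mem_subspace_eq_self, sub_self]
  rw [comp_apply, comp_apply, sub_apply, compress_apply, starProjection_apply,
    orthogonalProjectionOnto_starProjection_of_le hWV, LinearMap.comp_apply,
    orthogonalProjectionOnto_adjoint_apply_eq_zero hVD hWV hadj hPA hu]
  rfl

theorem sub_starProjection_conj_compress {Adag : D →ₗ[ℂ] D}
    (hadj : ∀ x y : D, inner ℂ (A x : H) (y : H) = inner ℂ (x : H) (Adag y : H))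
    (hPA : ∀ x : D, V.starProjection (A x) = A (inclusion (hWV.trans hVD) (W.orthogonalProjectionOnto x))) :
    (V.starProjection - W.starProjection) ∘L compress D V hVD (Adag ∘ₗ A) ∘L
        (V.starProjection - W.starProjection)
      = compress D V hVD (Adag ∘ₗ A) - compress D V hVD (Adag ∘ₗ A) ∘L W.starProjection := by
  rw [sub_comp, starProjection_comp_compress_comp_sub_eq_zero hVD hWV hadj hPA, sub_zero,
    ← comp_assoc, starProjection_comp_compress, comp_sub, compress_comp_starProjection]

end Intertwining

theorem compress_anticommutator_general
    (D V W : Submodule ℂ H)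
    (hVD : V ≤ D) (hWV : W ≤ V)
    [FiniteDimensional ℂ V] [FiniteDimensional ℂ W]
    (A Adag : D →ₗ[ℂ] D)
    (hadj : ∀ x y : D, (inner ℂ ((A x : H)) ((y : D) : H) : ℂ) = inner ℂ ((x : D) : H) ((Adag y : H)))
    (hPA : ∀ x : D,
      (V.subtypeL ∘L Submodule.orthogonalProjectionOnto V) ((A x : H))
        = ((A (Submodule.inclusion (hWV.trans hVD) (Submodule.orthogonalProjectionOnto W (x : H))) : D) : H)) :
    (compress D V hVD A ∘L ContinuousLinearMap.adjoint (compress D V hVD A)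
        + ContinuousLinearMap.adjoint (compress D V hVD A) ∘L compress D V hVD A
      = compress D V hVD (A ∘ₗ Adag + Adag ∘ₗ A)
        - (V.subtypeL ∘L Submodule.orthogonalProjectionOnto V - W.subtypeL ∘L Submodule.orthogonalProjectionOnto W)
            ∘L compress D V hVD (Adag ∘ₗ A)
            ∘L (V.subtypeL ∘L Submodule.orthogonalProjectionOnto V - W.subtypeL ∘L Submodule.orthogonalProjectionOnto W)) ∧
    ∀ x : H,
      (inner ℂ x ((compress D V hVD A ∘L ContinuousLinearMap.adjoint (compress D V hVD A)
          + ContinuousLinearMap.adjoint (compress D V hVD A) ∘L compress D V hVD A) x) : ℂ).re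
        ≤ (inner ℂ x ((compress D V hVD (A ∘ₗ Adag + Adag ∘ₗ A)) x) : ℂ).re := by
  have identity : compress D V hVD A ∘L adjoint (compress D V hVD A)
        + adjoint (compress D V hVD A) ∘L compress D V hVD A
      = compress D V hVD (A ∘ₗ Adag + Adag ∘ₗ A)
        - (V.starProjection - W.starProjection) ∘L compress D V hVD (Adag ∘ₗ A)
            ∘L (V.starProjection - W.starProjection) := by
    rw [adjoint_compress hVD hadj, compress_comp_compress_of_starProjection_apply_eq hVD hWV hPA,
      compress_comp_compress_eq_comp_starProjection hVD hWV hPA,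
      sub_starProjection_conj_compress hVD hWV hadj hPA, compress_add]
    abel
  refine ⟨identity, fun x => ?_⟩
  have hS : IsSelfAdjoint (V.starProjection - W.starProjection) :=
    (isSelfAdjoint_starProjection V).sub (isSelfAdjoint_starProjection W)
  have hpos := (isPositive_compress_comp hVD hadj).conj_adjoint (V.starProjection - W.starProjection)
  rw [hS.adjoint_eq] at hpos
  rw [identity, sub_apply, inner_sub_right, Complex.sub_re]
  exact sub_le_self _ (hpos.re_inner_nonneg_right x)

/-- If `P_V A ⊆ A P_W` for finite-dimensional `W ⊆ V ⊆ 𝒟`, then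
`A_V A_V^* + A_V^* A_V = (AA† + A†A)_V − (P_V−P_W) A†A (P_V−P_W)`;
in particular `A_V A_V^* + A_V^* A_V ≤ (AA† + A†A)_V` as quadratic forms. -/
theorem compress_anticommutator
    (D V W : Submodule ℂ H) (hD : Dense (D : Set H))
    (hVD : V ≤ D) (hWV : W ≤ V)
    [FiniteDimensional ℂ V] [FiniteDimensional ℂ W]
    (A Adag : D →ₗ[ℂ] D)
    (hadj : ∀ x y : D, (inner ℂ ((A x : H)) ((y : D) : H) : ℂ) = inner ℂ ((x : D) : H) ((Adag y : H)))
    (hPA : ∀ x : D,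
      (V.subtypeL ∘L Submodule.orthogonalProjectionOnto V) ((A x : H))
        = ((A (Submodule.inclusion (hWV.trans hVD) (Submodule.orthogonalProjectionOnto W (x : H))) : D) : H)) :
    (compress D V hVD A ∘L ContinuousLinearMap.adjoint (compress D V hVD A)
        + ContinuousLinearMap.adjoint (compress D V hVD A) ∘L compress D V hVD A
      = compress D V hVD (A ∘ₗ Adag + Adag ∘ₗ A)
        - (V.subtypeL ∘L Submodule.orthogonalProjectionOnto V - W.subtypeL ∘L Submodule.orthogonalProjectionOnto W)
            ∘L compress D V hVD (Adag ∘ₗ A)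
            ∘L (V.subtypeL ∘L Submodule.orthogonalProjectionOnto V - W.subtypeL ∘L Submodule.orthogonalProjectionOnto W)) ∧
    ∀ x : H,
      (inner ℂ x ((compress D V hVD A ∘L ContinuousLinearMap.adjoint (compress D V hVD A)
          + ContinuousLinearMap.adjoint (compress D V hVD A) ∘L compress D V hVD A) x) : ℂ).re
        ≤ (inner ℂ x ((compress D V hVD (A ∘ₗ Adag + Adag ∘ₗ A)) x) : ℂ).re :=
  compress_anticommutator_general D V W hVD hWV A Adag hadj hPA
end

section
/- Let $F : (0,\infty) \times \mathbb{R} \to \mathbb{R}$ and $G : \mathbb{R} \to \mathbb{R}$ satisfy: (1) for each $\lambda > 0$ the function $F_\lambda := F(\lambda, \cdot)$ is differentiable with $F_\lambda' > 0$, and $G$ is differentiable with $G' > 0$; (2) $F_\lambda'$ and $G'$ are monotone increasing; (3) $G$ is bounded below, with $C := \lim_{\mu \to -\infty} G(\mu)$; (4) there exists $M > 0$ such that for all $\lambda > 0$ and $\mu \in \mathbb{R}$, $G(\mu - M - \lambda) - \lambda \le F_\lambda(\mu) \le G(\mu + M + \lambda) + \lambda$. Then for every $\mu_0 \in \mathbb{R}$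 there exist $\lambda_0 > 0$ and $0 < \rho_1 < \rho_2 < \infty$ such that $\rho_1 \le F_\lambda'(\mu_0) \le \rho_2$ for all $\lambda \in (0, \lambda_0)$. -/
open Filter

lemma slope_bounds_aux (f : ℝ → ℝ) (hf : Differentiable ℝ f) (hm : Monotone (deriv f))
    {a b : ℝ} (hab : a < b) :
    deriv f a ≤ (f b - f a) / (b - a) ∧ (f b - f a) / (b - a) ≤ deriv f b := by
  obtain ⟨c, hc, hceq⟩ := exists_hasDerivAt_eq_slope f (deriv f) hab
    hf.continuous.continuousOn (fun x _ => (hf x).hasDerivAt)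
  exact ⟨hceq ▸ hm hc.1.le, hceq ▸ hm hc.2.le⟩

/-- Uniform two-sided bounds on the density: if each `F_λ` and `G` are differentiable
with positive increasing derivatives, `G` is bounded below with limit `C` at `-∞`, and
`G(μ-M-λ) - λ ≤ F_λ(μ) ≤ G(μ+M+λ) + λ`, then near `λ = 0` the derivatives
`F_λ'(μ₀)` are bounded between two positive constants. -/
theorem uniform_density_bounds (F : ℝ → ℝ → ℝ) (G : ℝ → ℝ) (C M : ℝ) (hM : 0 < M)
    (hFdiff : ∀ lam : ℝ, 0 < lam → Differentiable ℝ (F lam))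
    (hFpos : ∀ lam : ℝ, 0 < lam → ∀ μ : ℝ, 0 < deriv (F lam) μ)
    (hFmono : ∀ lam : ℝ, 0 < lam → Monotone (deriv (F lam)))
    (hGdiff : Differentiable ℝ G)
    (hGpos : ∀ μ : ℝ, 0 < deriv G μ)
    (hGmono : Monotone (deriv G))
    (hGbelow : Tendsto G atBot (nhds C))
    (hsandwich : ∀ lam : ℝ, 0 < lam → ∀ μ : ℝ,
      G (μ - M - lam) - lam ≤ F lam μ ∧ F lam μ ≤ G (μ + M + lam) + lam) :
    ∀ μ₀ : ℝ, ∃ lam₀ ρ₁ ρ₂ : ℝ, 0 < lam₀ ∧ 0 < ρ₁ ∧ ρ₁ < ρ₂ ∧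
      ∀ lam : ℝ, 0 < lam → lam < lam₀ →
        ρ₁ ≤ deriv (F lam) μ₀ ∧ deriv (F lam) μ₀ ≤ ρ₂ := by
  intro μ₀
  have GsM : StrictMono G := strictMono_of_deriv_pos hGpos
  have hCle : ∀ x, C ≤ G x := by
    intro x
    refine le_of_tendsto hGbelow ?_
    filter_upwards [eventually_le_atBot x] with y hy using GsM.monotone hy
  set δ : ℝ := G (μ₀ - M - 1) - C with hδdef
  have hδ : 0 < δ := by
    have h1 : C ≤ G (μ₀ - M - 2) := hCle _
    have h2 : G (μ₀ - M - 2) < G (μ₀ - M - 1) := GsM (by linarith)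
    simp only [hδdef]; linarith
  obtain ⟨y, hy1, hy2⟩ := ((hGbelow.eventually_lt_const
      (show C < C + δ / 4 by linarith)).and (eventually_le_atBot (μ₀ - M - 2))).exists
  set μ : ℝ := y - M - 1 with hμdef
  have hμlt : μ < μ₀ := by simp only [hμdef]; linarith
  have hden : 0 < μ₀ - μ := by linarith
  set ρ₁ : ℝ := (δ / 4) / (μ₀ - μ) with hρ₁def
  have hρ₁pos : 0 < ρ₁ := by positivity
  set ρ₂ : ℝ := max (G (μ₀ + 2 + M) + 2 - C) (ρ₁ + 1) with hρ₂def
  refine ⟨min 1 (δ / 4), ρ₁, ρ₂, by positivity, hρ₁pos, ?_, ?_⟩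
  · exact lt_of_lt_of_le (by linarith) (le_max_right _ _)
  · intro lam hlam hlamlt
    have hlam1 : lam < 1 := lt_of_lt_of_le hlamlt (min_le_left _ _)
    have hlamδ : lam < δ / 4 := lt_of_lt_of_le hlamlt (min_le_right _ _)
    obtain ⟨hs1, hs2⟩ := slope_bounds_aux (F lam) (hFdiff lam hlam) (hFmono lam hlam) hμlt
    obtain ⟨ht1, ht2⟩ := slope_bounds_aux (F lam) (hFdiff lam hlam) (hFmono lam hlam)
      (show μ₀ < μ₀ + 1 by linarith)
    constructor
    · -- lower bound
      refine le_trans ?_ hs2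
      rw [div_le_div_iff₀ (by positivity) hden] at *
      have hA : G (μ₀ - M - 1) - lam ≤ F lam μ₀ := by
        have := (hsandwich lam hlam μ₀).1
        have hmono := GsM.monotone (show μ₀ - M - 1 ≤ μ₀ - M - lam by linarith)
        linarith
      have hB : F lam μ ≤ G y + lam := by
        have := (hsandwich lam hlam μ).2
        have hmono := GsM.monotone (show μ + M + lam ≤ y by simp only [hμdef]; linarith)
        linarith
      have : δ / 4 ≤ F lam μ₀ - F lam μ := by simp only [hδdef] at *; linarith
      nlinarith [hden]
    · -- upper bound
      refine le_trans ht1 (le_trans ?_ (le_max_left _ _))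
      have hA : F lam (μ₀ + 1) ≤ G (μ₀ + 2 + M) + 1 := by
        have := (hsandwich lam hlam (μ₀ + 1)).2
        have hmono := GsM.monotone (show μ₀ + 1 + M + lam ≤ μ₀ + 2 + M by linarith)
        linarith
      have hB : C - 1 ≤ F lam μ₀ := by
        have := (hsandwich lam hlam μ₀).1
        have := hCle (μ₀ - M - lam)
        linarith
      rw [show μ₀ + 1 - μ₀ = (1:ℝ) by ring, div_one]
      linarith
end
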